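/- arXiv:1607.08702 — 3 statements merged into one kernel-verified Lean document; each statement's English description precedes it below -/
import Mathlib

section
/- Let f : ℝ² → ℝ³ be the map given by f(t,s) = (t+s, t² + 2st, t³ + 3st²) and let g(u,w) = (u, w², w³). Then there exist smooth diffeomorphisms σ : ℝ² → ℝ² and τ : ℝ³ → ℝ³ with τ ∘ f = g ∘ σ. -/
/-- The cuspidal edge parametrization `f(t,s) = (t+s, t²+2st, t³+3st²)` is
diffeomorphic to the normal form `g(u,w) = (u, w², w³)`: there exist smooth
diffeomorphisms `σ` of the source and `τ` of the target with `τ ∘ f = g ∘ σ`. -/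
theorem cuspidal_edge_diffeomorphic_normal_form :
    ∃ (σ : (ℝ × ℝ) ≃ (ℝ × ℝ)) (τ : (ℝ × ℝ × ℝ) ≃ (ℝ × ℝ × ℝ)),
      ContDiff ℝ (⊤ : ℕ∞) (σ : ℝ × ℝ → ℝ × ℝ) ∧ ContDiff ℝ (⊤ : ℕ∞) (σ.symm : ℝ × ℝ → ℝ × ℝ) ∧
      ContDiff ℝ (⊤ : ℕ∞) (τ : ℝ × ℝ × ℝ → ℝ × ℝ × ℝ) ∧
      ContDiff ℝ (⊤ : ℕ∞) (τ.symm : ℝ × ℝ × ℝ → ℝ × ℝ × ℝ) ∧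
      ∀ t s : ℝ,
        τ (t + s, t ^ 2 + 2 * s * t, t ^ 3 + 3 * s * t ^ 2) =
          (fun p : ℝ × ℝ => (p.1, p.2 ^ 2, p.2 ^ 3)) (σ (t, s)) := by
  refine ⟨⟨fun p => (p.1 + p.2, p.2), fun p => (p.1 - p.2, p.2), ?_, ?_⟩,
    ⟨fun p => (p.1, p.1 ^ 2 - p.2.1, 2⁻¹ * (p.2.2 + 2 * p.1 ^ 3 - 3 * p.1 * p.2.1)),
     fun p => (p.1, p.1 ^ 2 - p.2.1, 2 * p.2.2 + p.1 ^ 3 - 3 * p.1 * p.2.1),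
     ?_, ?_⟩, ?_, ?_, ?_, ?_, ?_⟩
  · rintro ⟨a, b⟩
    simp only [Prod.mk.injEq]
    exact ⟨by ring, trivial⟩
  · rintro ⟨a, b⟩
    simp only [Prod.mk.injEq]
    exact ⟨by ring, trivial⟩
  · rintro ⟨a, b, c⟩
    simp only [Prod.mk.injEq]
    exact ⟨trivial, by ring, by ring⟩
  · rintro ⟨a, b, c⟩
    simp only [Prod.mk.injEq]
    exact ⟨trivial, by ring, by ring⟩
  · show ContDiff ℝ (⊤ : ℕ∞) fun p : ℝ × ℝ => ((p.1 + p.2, p.2) : ℝ × ℝ)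
    fun_prop
  · show ContDiff ℝ (⊤ : ℕ∞) fun p : ℝ × ℝ => ((p.1 - p.2, p.2) : ℝ × ℝ)
    fun_prop
  · show ContDiff ℝ (⊤ : ℕ∞) fun p : ℝ × ℝ × ℝ =>
      ((p.1, p.1 ^ 2 - p.2.1, 2⁻¹ * (p.2.2 + 2 * p.1 ^ 3 - 3 * p.1 * p.2.1)) : ℝ × ℝ × ℝ)
    fun_prop
  · show ContDiff ℝ (⊤ : ℕ∞) fun p : ℝ × ℝ × ℝ =>
      ((p.1, p.1 ^ 2 - p.2.1, 2 * p.2.2 + p.1 ^ 3 - 3 * p.1 * p.2.1) : ℝ × ℝ × ℝ)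
    fun_prop
  · intro t s
    simp only [Equiv.coe_fn_mk, Prod.mk.injEq]
    exact ⟨trivial, by ring, by ring⟩
end

section
/- The swallowtail parametrization f(t,s) = (t²+s, t³+(3/2)st, t⁴+2st²) is diffeomorphic to the normal form g(u,t) = (u, t³+ut, t⁴+(2/3)ut²): there exist smooth diffeomorphisms σ : ℝ² → ℝ² and τ : ℝ³ → ℝ³ with τ ∘ f = g ∘ σ. -/
/-- The swallowtail parametrization `f(t,s) = (t²+s, t³+(3/2)st, t⁴+2st²)` is
diffeomorphic to the normal form `g(u,t) = (u, t³+ut, t⁴+(2/3)ut²)`. -/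
theorem swallowtail_diffeomorphic_normal_form :
    ∃ (σ : (ℝ × ℝ) ≃ (ℝ × ℝ)) (τ : (ℝ × ℝ × ℝ) ≃ (ℝ × ℝ × ℝ)),
      ContDiff ℝ (⊤ : ℕ∞) (σ : ℝ × ℝ → ℝ × ℝ) ∧ ContDiff ℝ (⊤ : ℕ∞) (σ.symm : ℝ × ℝ → ℝ × ℝ) ∧
      ContDiff ℝ (⊤ : ℕ∞) (τ : ℝ × ℝ × ℝ → ℝ × ℝ × ℝ) ∧
      ContDiff ℝ (⊤ : ℕ∞) (τ.symm : ℝ × ℝ × ℝ → ℝ × ℝ × ℝ) ∧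
      ∀ t s : ℝ,
        τ (t ^ 2 + s, t ^ 3 + (3 / 2) * s * t, t ^ 4 + 2 * s * t ^ 2) =
          (fun p : ℝ × ℝ =>
            (p.1, p.2 ^ 3 + p.1 * p.2, p.2 ^ 4 + (2 / 3) * p.1 * p.2 ^ 2)) (σ (t, s)) := by
  refine ⟨⟨fun p => (-3 * p.1 ^ 2 - 3 * p.2, p.1),
           fun q => (q.2, (-1/3 : ℝ) * q.1 - q.2 ^ 2), ?_, ?_⟩,
         ⟨fun v => (-3 * v.1, -2 * v.2.1, -v.2.2),
           fun w => ((-1/3 : ℝ) * w.1, (-1/2 : ℝ) * w.2.1, -w.2.2), ?_, ?_⟩,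
         ?_, ?_, ?_, ?_, ?_⟩
  · intro p; simp only [Prod.ext_iff]; exact ⟨trivial, by ring⟩
  · intro q; simp only [Prod.ext_iff]; exact ⟨by ring, trivial⟩
  · intro v; simp only [Prod.ext_iff]; refine ⟨by ring, by ring, by ring⟩
  · intro w; simp only [Prod.ext_iff]; refine ⟨by ring, by ring, by ring⟩
  · simp only [Equiv.coe_fn_mk]; fun_prop
  · simp only [Equiv.coe_fn_symm_mk]; fun_prop
  · simp only [Equiv.coe_fn_mk]; fun_prop
  · simp only [Equiv.coe_fn_symm_mk]; fun_prop
  · intro t s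
    simp [Prod.ext_iff]
    refine ⟨by ring, by ring, by ring⟩
end

section
/- Let h(u,t) = t⁵ + (5/9)ut³. Then there exist smooth functions a, b : ℝ² → ℝ such that ∂h/∂u = a + b·t and ∂h/∂t = b·(3t² + u); that is, dh lies in the module generated by du and d(t³+ut) over C^∞(ℝ²), i.e., h is an admissible opening component of the Whitney cusp g(u,t)=(u, t³+ut). -/
/-- For `h(u,t) = t⁵ + (5/9)ut³` there exist smooth functions `a, b : ℝ² → ℝ`
such that `∂h/∂u = a + b·t` and `∂h/∂t = b·(3t² + u)`, i.e. `dh` lies in the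
module generated by `du` and `d(t³+ut)` over `C^∞(ℝ²)`: `h` is an opening
component of the Whitney cusp `g(u,t) = (u, t³+ut)`. -/
theorem open_swallowtail_opening_component :
    ∃ a b : ℝ × ℝ → ℝ, ContDiff ℝ (⊤ : ℕ∞) a ∧ ContDiff ℝ (⊤ : ℕ∞) b ∧
      ∀ u t : ℝ,
        (deriv (fun u' : ℝ => t ^ 5 + (5 / 9) * u' * t ^ 3) u =
          a (u, t) + b (u, t) * t) ∧
        (deriv (fun t' : ℝ => t' ^ 5 + (5 / 9) * u * t' ^ 3) t =
          b (u, t) * (3 * t ^ 2 + u)) := by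
  refine ⟨fun p => -(10 / 9) * p.2 ^ 3, fun p => (5 / 3) * p.2 ^ 2, ?_, ?_, ?_⟩
  · exact contDiff_const.mul (contDiff_snd.pow 3)
  · exact contDiff_const.mul (contDiff_snd.pow 2)
  · intro u t
    constructor
    · have h1 : HasDerivAt (fun u' : ℝ => t ^ 5 + (5 / 9) * u' * t ^ 3)
          (5 / 9 * t ^ 3) u := by
        simpa using ((hasDerivAt_id u).const_mul (5 / 9 : ℝ)
          |>.mul_const (t ^ 3)).const_add (t ^ 5)
      rw [h1.deriv]; ring
    · have h2 : HasDerivAt (fun t' : ℝ => t' ^ 5 + (5 / 9) * u * t' ^ 3)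
          (5 * t ^ 4 + (5 / 9) * u * (3 * t ^ 2)) t := by
        simpa [Pi.add_def] using (hasDerivAt_pow 5 t).add
          (((hasDerivAt_pow 3 t).const_mul ((5 / 9) * u)))
      rw [h2.deriv]; ring
end
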